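/- arXiv:2311.05428 — 3 statements merged into one kernel-verified Lean document; each statement's English description precedes it below -/
import Mathlib

section
/- A subset C ⊆ {0,1}^14 is a completely regular code with intersection array {14; 2} if and only if C is an orthogonal array OA(2048,14,2,7) that is a set (simple). In particular |C| = 2048. -/
/-- `C` is a binary orthogonal array OA(N,n,2,t). -/
def IsOA (n t N : ℕ) (C : Multiset (Fin n → Bool)) : Prop :=
  Multiset.card C = N ∧
    ∀ S : Finset (Fin n), S.card = t → ∀ a : Fin n → Bool,
      (Multiset.countP (fun x => ∀ i ∈ S, x i = a i) C) * 2 ^ t = N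

/-- `C` is completely regular in `Q_n` with intersection array `{n; c}`. -/
def IsCR (n c : ℕ) (C : Finset (Fin n → Bool)) : Prop :=
  (∀ x ∈ C, (C.filter fun y => hammingDist x y = 1).card = 0) ∧
  (∀ x ∉ C, (C.filter fun y => hammingDist x y = 1).card = c)

namespace CR14

open Finset

abbrev V14 := Fin 14 → Bool

def chi (S : Finset (Fin 14)) (x : V14) : ℤ := ∏ i ∈ S, (if x i then -1 else 1)

def fl (i : Fin 14) (x : V14) : V14 := Function.update x i (!(x i))

lemma fl_same (i : Fin 14) (x : V14) : fl i x i = !(x i) := Function.update_self i _ x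

lemma fl_ne (i j : Fin 14) (x : V14) (h : j ≠ i) : fl i x j = x j := Function.update_of_ne h _ x

lemma fl_fl (i : Fin 14) (x : V14) : fl i (fl i x) = x := by
  funext j
  by_cases h : j = i
  · subst h; simp [fl]
  · rw [fl_ne _ _ _ h, fl_ne _ _ _ h]

lemma chi_empty (x : V14) : chi ∅ x = 1 := by simp [chi]

lemma chi_mul (S : Finset (Fin 14)) (x y : V14) :
    chi S x * chi S y = ∏ i ∈ S, (if x i = y i then (1:ℤ) else -1) := by
  rw [chi, chi, ← Finset.prod_mul_distrib]
  refine Finset.prod_congr rfl fun i _ => ?_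
  cases hx : x i <;> cases hy : y i <;> simp

lemma orth (T : Finset (Fin 14)) (x y : V14) :
    ∑ S ∈ T.powerset, chi S x * chi S y =
      if (∀ i ∈ T, x i = y i) then 2 ^ T.card else 0 := by
  rw [Finset.sum_congr rfl fun S _ => chi_mul S x y]
  have h2 : ∏ i ∈ T, ((if x i = y i then (1:ℤ) else -1) + 1)
      = ∑ S ∈ T.powerset, ∏ i ∈ S, (if x i = y i then (1:ℤ) else -1) := by
    rw [Finset.prod_add]
    exact Finset.sum_congr rfl fun S hS => by simp
  rw [← h2]
  by_cases h : ∀ i ∈ T, x i = y i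
  · rw [if_pos h, Finset.prod_congr rfl (fun i hi => by rw [if_pos (h i hi)]), Finset.prod_const]
    norm_num
  · rw [if_neg h]
    push_neg at h
    obtain ⟨i, hi, hne⟩ := h
    exact Finset.prod_eq_zero hi (by rw [if_neg hne]; ring)

lemma orth_univ (x y : V14) :
    ∑ S : Finset (Fin 14), chi S x * chi S y = if x = y then 2 ^ 14 else 0 := by
  have h := orth Finset.univ x y
  rw [Finset.powerset_univ] at h
  rw [h]
  by_cases hxy : x = y
  · rw [if_pos (fun i _ => by rw [hxy]), if_pos hxy]
    norm_num
  · rw [if_neg hxy, if_neg]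
    intro hall
    exact hxy (funext fun i => hall i (Finset.mem_univ i))

lemma chi_fl (S : Finset (Fin 14)) (i : Fin 14) (x : V14) :
    chi S (fl i x) = (if i ∈ S then -1 else 1) * chi S x := by
  by_cases hi : i ∈ S
  · rw [if_pos hi, chi, chi, ← Finset.mul_prod_erase S _ hi, ← Finset.mul_prod_erase S _ hi]
    have h1 : ∏ j ∈ S.erase i, (if fl i x j then (-1:ℤ) else 1)
        = ∏ j ∈ S.erase i, (if x j then (-1:ℤ) else 1) :=
      Finset.prod_congr rfl fun j hj => by rw [fl_ne i j x (Finset.ne_of_mem_erase hj)]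
    rw [h1, fl_same]
    cases hx : x i <;> simp
  · rw [if_neg hi, one_mul, chi, chi]
    exact Finset.prod_congr rfl fun j hj => by
      rw [fl_ne i j x (fun h => hi (h ▸ hj))]

lemma sum_sign (S : Finset (Fin 14)) :
    ∑ i : Fin 14, (if i ∈ S then (-1:ℤ) else 1) = 14 - 2 * S.card := by
  rw [Finset.sum_ite, Finset.sum_const, Finset.sum_const]
  rw [Finset.filter_mem_eq_inter, Finset.univ_inter]
  have : Finset.filter (fun i => ¬ i ∈ S) Finset.univ = Sᶜ := by
    ext i; simp
  rw [this, Finset.card_compl]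
  have hc : S.card ≤ 14 := by
    have := Finset.card_le_univ S; simpa using this
  simp only [Fintype.card_fin, nsmul_eq_mul]
  omega

lemma sum_chi_fl (S : Finset (Fin 14)) (x : V14) :
    ∑ i : Fin 14, chi S (fl i x) = (14 - 2 * S.card) * chi S x := by
  simp only [chi_fl]
  rw [← Finset.sum_mul, sum_sign]

lemma sum_chi (S : Finset (Fin 14)) :
    ∑ x : V14, chi S x = if S = ∅ then 2 ^ 14 else 0 := by
  by_cases hS : S = ∅
  · subst hS
    simp [chi, Finset.card_univ]
  · rw [if_neg hS]
    obtain ⟨i, hi⟩ := Finset.nonempty_iff_ne_empty.2 hS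
    have hb : Function.Bijective (fl i) :=
      ⟨fun a b hab => by rw [← fl_fl i a, hab, fl_fl], fun y => ⟨fl i y, fl_fl i y⟩⟩
    have h1 : ∑ x : V14, chi S (fl i x) = ∑ x : V14, chi S x :=
      Fintype.sum_bijective (fl i) hb _ _ fun x => rfl
    have h2 : ∑ x : V14, chi S (fl i x) = -∑ x : V14, chi S x := by
      simp only [chi_fl, if_pos hi, neg_one_mul]
      exact Finset.sum_neg_distrib _
    have := h1.symm.trans h2
    linarith

lemma chi_symmDiff (S S' : Finset (Fin 14)) (x : V14) :
    chi S x * chi S' x = chi (symmDiff S S') x := by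
  classical
  have hsq : ∀ i, (if x i then (-1:ℤ) else 1) * (if x i then (-1:ℤ) else 1) = 1 := by
    intro i; cases x i <;> norm_num
  have h1 : chi (S ∪ S') x * chi (S ∩ S') x = chi S x * chi S' x :=
    Finset.prod_union_inter
  have h2 : chi (S ∪ S') x = chi (symmDiff S S') x * chi (S ∩ S') x := by
    have hd : Disjoint (symmDiff S S') (S ∩ S') := disjoint_symmDiff_inf S S'
    have hu : symmDiff S S' ∪ (S ∩ S') = S ∪ S' := by simpa using symmDiff_sup_inf S S'
    rw [chi, chi, chi, ← Finset.prod_union hd, hu]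
  have hone : chi (S ∩ S') x * chi (S ∩ S') x = 1 := by
    rw [chi, ← Finset.prod_mul_distrib, Finset.prod_congr rfl fun i _ => hsq i,
      Finset.prod_const_one]
  calc chi S x * chi S' x = chi (symmDiff S S') x * (chi (S ∩ S') x * chi (S ∩ S') x) := by
        rw [← h1, h2]; ring
    _ = chi (symmDiff S S') x := by rw [hone, mul_one]

lemma orth_chi (S S' : Finset (Fin 14)) :
    ∑ x : V14, chi S x * chi S' x = if S = S' then 2 ^ 14 else 0 := by
  simp only [chi_symmDiff]
  rw [sum_chi]
  congr 1
  rw [← Finset.bot_eq_empty, symmDiff_eq_bot]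

def fI (C : Finset V14) (x : V14) : ℤ := if x ∈ C then 1 else 0
def FW (C : Finset V14) (S : Finset (Fin 14)) : ℤ := ∑ x : V14, fI C x * chi S x
def eN (C : Finset V14) (x : V14) : ℤ := ∑ i : Fin 14, fI C (fl i x)

lemma fI_nonneg (C : Finset V14) (x : V14) : 0 ≤ fI C x := by
  unfold fI; split <;> norm_num

lemma eN_nonneg (C : Finset V14) (x : V14) : 0 ≤ eN C x :=
  Finset.sum_nonneg fun i _ => fI_nonneg C (fl i x)

lemma sum_fI (C : Finset V14) : ∑ x : V14, fI C x = C.card := by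
  unfold fI
  rw [Finset.sum_ite_mem, Finset.univ_inter, Finset.sum_const, nsmul_eq_mul, mul_one]

lemma FW_empty (C : Finset V14) : FW C ∅ = C.card := by
  unfold FW
  rw [Finset.sum_congr rfl fun x _ => by rw [chi_empty, mul_one], sum_fI]

lemma inversion (C : Finset V14) (x : V14) :
    ∑ S : Finset (Fin 14), FW C S * chi S x = 2 ^ 14 * fI C x := by
  have h1 : ∀ S : Finset (Fin 14), FW C S * chi S x
      = ∑ y : V14, fI C y * (chi S y * chi S x) := by
    intro S
    rw [FW, Finset.sum_mul]
    exact Finset.sum_congr rfl fun y _ => by ring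
  rw [Finset.sum_congr rfl fun S _ => h1 S, Finset.sum_comm]
  have h2 : ∀ y : V14, ∑ S : Finset (Fin 14), fI C y * (chi S y * chi S x)
      = fI C y * (if y = x then 2 ^ 14 else 0) := by
    intro y
    rw [← Finset.mul_sum, orth_univ]
  rw [Finset.sum_congr rfl fun y _ => h2 y]
  simp [mul_ite, mul_comm]

lemma expansion (C : Finset V14) (x : V14) :
    ∑ S : Finset (Fin 14), (14 - 2 * (S.card : ℤ)) * FW C S * chi S x = 2 ^ 14 * eN C x := by
  have h1 : ∀ S : Finset (Fin 14), (14 - 2 * (S.card : ℤ)) * FW C S * chi S x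
      = ∑ y : V14, ∑ i : Fin 14, fI C y * (chi S (fl i y) * chi S x) := by
    intro S
    rw [FW, Finset.mul_sum, Finset.sum_mul]
    refine Finset.sum_congr rfl fun y _ => ?_
    have hs : ∑ i : Fin 14, fI C y * (chi S (fl i y) * chi S x)
        = (∑ i : Fin 14, chi S (fl i y)) * (fI C y * chi S x) := by
      rw [Finset.sum_mul]
      exact Finset.sum_congr rfl fun i _ => by ring
    rw [hs, sum_chi_fl]
    ring
  rw [Finset.sum_congr rfl fun S _ => h1 S, Finset.sum_comm]
  have h2 : ∀ y : V14, ∑ S : Finset (Fin 14), ∑ i : Fin 14, fI C y * (chi S (fl i y) * chi S x)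
      = ∑ i : Fin 14, fI C y * (if fl i y = x then (2:ℤ) ^ 14 else 0) := by
    intro y
    rw [Finset.sum_comm]
    exact Finset.sum_congr rfl fun i _ => by rw [← Finset.mul_sum, orth_univ (fl i y) x]
  rw [Finset.sum_congr rfl fun y _ => h2 y, Finset.sum_comm]
  have h3 : ∀ i : Fin 14, ∑ y : V14, fI C y * (if fl i y = x then (2:ℤ) ^ 14 else 0)
      = 2 ^ 14 * fI C (fl i x) := by
    intro i
    have hiff : ∀ y : V14, (fl i y = x) ↔ (y = fl i x) := by
      intro y
      constructor
      · intro h; rw [← h, fl_fl]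
      · intro h; rw [h, fl_fl]
    rw [Finset.sum_congr rfl fun y _ => by rw [if_congr (hiff y) rfl rfl]]
    simp [mul_ite, mul_comm]
  rw [Finset.sum_congr rfl fun i _ => h3 i, ← Finset.mul_sum, eN]

lemma parseval (C : Finset V14) :
    ∑ S : Finset (Fin 14), (FW C S) ^ 2 = 2 ^ 14 * C.card := by
  have h1 : ∀ S : Finset (Fin 14), (FW C S) ^ 2 = ∑ x : V14, fI C x * (FW C S * chi S x) := by
    intro S
    nth_rewrite 1 [pow_two, FW]
    rw [Finset.sum_mul]
    exact Finset.sum_congr rfl fun x _ => by ring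
  rw [Finset.sum_congr rfl fun S _ => h1 S, Finset.sum_comm]
  have h2 : ∀ x : V14, ∑ S : Finset (Fin 14), fI C x * (FW C S * chi S x)
      = fI C x * (2 ^ 14 * fI C x) := by
    intro x
    rw [← Finset.mul_sum, inversion]
  rw [Finset.sum_congr rfl fun x _ => h2 x]
  have h3 : ∀ x : V14, fI C x * (2 ^ 14 * fI C x) = 2 ^ 14 * fI C x := by
    intro x
    unfold fI; split <;> ring
  rw [Finset.sum_congr rfl fun x _ => h3 x, ← Finset.mul_sum, sum_fI]

lemma spectral (C : Finset V14) :
    ∑ S : Finset (Fin 14), (14 - 2 * (S.card : ℤ)) * (FW C S) ^ 2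
      = 2 ^ 14 * ∑ x : V14, fI C x * eN C x := by
  have h1 : ∀ S : Finset (Fin 14), (14 - 2 * (S.card : ℤ)) * (FW C S) ^ 2
      = ∑ x : V14, fI C x * ((14 - 2 * (S.card : ℤ)) * FW C S * chi S x) := by
    intro S
    have hF : ∑ x : V14, fI C x * chi S x = FW C S := rfl
    have hs : ∑ x : V14, fI C x * ((14 - 2 * (S.card : ℤ)) * FW C S * chi S x)
        = ((14 - 2 * (S.card : ℤ)) * FW C S) * ∑ x : V14, fI C x * chi S x := by
      rw [Finset.mul_sum]
      exact Finset.sum_congr rfl fun x _ => by ring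
    rw [hs, hF]
    ring
  rw [Finset.sum_congr rfl fun S _ => h1 S, Finset.sum_comm]
  have h2 : ∀ x : V14, ∑ S : Finset (Fin 14), fI C x * ((14 - 2 * (S.card : ℤ)) * FW C S * chi S x)
      = fI C x * (2 ^ 14 * eN C x) := by
    intro x
    rw [← Finset.mul_sum, expansion]
  rw [Finset.sum_congr rfl fun x _ => h2 x, Finset.mul_sum]
  exact Finset.sum_congr rfl fun x _ => by ring

lemma strength_eq (C : Finset V14) (T : Finset (Fin 14)) (a : V14) :
    ∑ S ∈ T.powerset, chi S a * FW C S
      = 2 ^ T.card * ((C.filter fun x => ∀ i ∈ T, x i = a i).card : ℤ) := by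
  have h1 : ∀ S ∈ T.powerset, chi S a * FW C S = ∑ x : V14, fI C x * (chi S x * chi S a) := by
    intro S _
    rw [FW, Finset.mul_sum]
    exact Finset.sum_congr rfl fun x _ => by ring
  rw [Finset.sum_congr rfl h1, Finset.sum_comm]
  have h2 : ∀ x : V14, ∑ S ∈ T.powerset, fI C x * (chi S x * chi S a)
      = fI C x * (if (∀ i ∈ T, x i = a i) then (2:ℤ) ^ T.card else 0) := by
    intro x
    rw [← Finset.mul_sum, orth]
  rw [Finset.sum_congr rfl fun x _ => h2 x]
  have h3 : ∀ x : V14, fI C x * (if (∀ i ∈ T, x i = a i) then (2:ℤ) ^ T.card else 0)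
      = if (x ∈ C ∧ ∀ i ∈ T, x i = a i) then (2:ℤ) ^ T.card else 0 := by
    intro x
    unfold fI
    by_cases hx : x ∈ C <;> by_cases hp : ∀ i ∈ T, x i = a i <;>
      simp [hx, hp]
  rw [Finset.sum_congr rfl fun x _ => h3 x, Finset.sum_ite, Finset.sum_const, Finset.sum_const,
    smul_zero, add_zero, nsmul_eq_mul]
  have h4 : Finset.filter (fun x => x ∈ C ∧ ∀ i ∈ T, x i = a i) Finset.univ
      = C.filter fun x => ∀ i ∈ T, x i = a i := by
    ext x; simp
  rw [h4]
  ring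

lemma dist_fl (x : V14) (i : Fin 14) : hammingDist x (fl i x) = 1 := by
  have h : Finset.filter (fun j => x j ≠ fl i x j) Finset.univ = {i} := by
    ext j
    simp only [Finset.mem_filter, Finset.mem_univ, true_and, Finset.mem_singleton]
    constructor
    · intro hj
      by_contra hne
      exact hj (fl_ne i j x hne).symm
    · intro hj
      subst hj
      rw [fl_same]
      cases x j <;> simp
  rw [hammingDist, h, Finset.card_singleton]

lemma dist_one (x y : V14) (h : hammingDist x y = 1) : ∃ i, y = fl i x := by
  rw [hammingDist] at h
  obtain ⟨i, hi⟩ := Finset.card_eq_one.1 h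
  refine ⟨i, funext fun j => ?_⟩
  by_cases hj : j = i
  · subst hj
    have : j ∈ Finset.filter (fun k => x k ≠ y k) Finset.univ := by rw [hi]; simp
    simp only [Finset.mem_filter, Finset.mem_univ, true_and] at this
    rw [fl_same]
    revert this
    cases x j <;> cases y j <;> simp
  · have : j ∉ Finset.filter (fun k => x k ≠ y k) Finset.univ := by
      rw [hi]; simpa using hj
    simp only [Finset.mem_filter, Finset.mem_univ, true_and, not_not] at this
    rw [fl_ne i j x hj, this]

lemma card_dist_one (C : Finset V14) (x : V14) :
    ((C.filter fun y => hammingDist x y = 1).card : ℤ) = eN C x := by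
  have himg : C.filter (fun y => hammingDist x y = 1)
      = (Finset.univ.filter fun i => fl i x ∈ C).image (fun i => fl i x) := by
    ext y
    simp only [Finset.mem_filter, Finset.mem_image, Finset.mem_univ, true_and]
    constructor
    · rintro ⟨hyC, hd⟩
      obtain ⟨i, hi⟩ := dist_one x y hd
      exact ⟨i, by rw [← hi]; exact hyC, hi.symm⟩
    · rintro ⟨i, hiC, rfl⟩
      exact ⟨hiC, dist_fl x i⟩
  have hinj : Set.InjOn (fun i => fl i x) (Finset.univ.filter fun i => fl i x ∈ C) := by
    intro i _ j _ hij
    by_contra hne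
    have h1 : fl i x i = fl j x i := congrFun hij i
    rw [fl_same, fl_ne j i x hne] at h1
    exact (Bool.not_ne_self (x i)) h1
  rw [himg, Finset.card_image_of_injOn hinj, Finset.card_filter]
  push_cast
  unfold eN fI
  exact Finset.sum_congr rfl fun i _ => by split <;> simp

lemma eN_fourier (C : Finset V14) (S : Finset (Fin 14)) :
    ∑ x : V14, eN C x * chi S x = (14 - 2 * (S.card : ℤ)) * FW C S := by
  have h1 : ∑ x : V14, eN C x * chi S x
      = ∑ i : Fin 14, ∑ x : V14, fI C (fl i x) * chi S x := by
    rw [Finset.sum_comm]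
    exact Finset.sum_congr rfl fun x _ => by rw [eN, Finset.sum_mul]
  have hb : ∀ i : Fin 14, Function.Bijective (fl i) :=
    fun i => ⟨fun a b hab => by rw [← fl_fl i a, hab, fl_fl], fun y => ⟨fl i y, fl_fl i y⟩⟩
  have h2 : ∀ i : Fin 14, ∑ x : V14, fI C (fl i x) * chi S x
      = ∑ y : V14, fI C y * chi S (fl i y) := by
    intro i
    refine Fintype.sum_bijective (fl i) (hb i)
      (fun x => fI C (fl i x) * chi S x) (fun y => fI C y * chi S (fl i y)) (fun x => ?_)
    show fI C (fl i x) * chi S x = fI C (fl i x) * chi S (fl i (fl i x))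
    rw [fl_fl]
  rw [h1, Finset.sum_congr rfl fun i _ => h2 i, Finset.sum_comm]
  have h3 : ∀ y : V14, ∑ i : Fin 14, fI C y * chi S (fl i y)
      = ((14 - 2 * (S.card : ℤ)) * chi S y) * fI C y := by
    intro y
    rw [← Finset.mul_sum, sum_chi_fl]
    ring
  rw [Finset.sum_congr rfl fun y _ => h3 y]
  have h4 : ∑ y : V14, ((14 - 2 * (S.card : ℤ)) * chi S y) * fI C y
      = (14 - 2 * (S.card : ℤ)) * ∑ y : V14, fI C y * chi S y := by
    rw [Finset.mul_sum]
    exact Finset.sum_congr rfl fun y _ => by ring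
  rw [h4]
  rfl

lemma countP_eq (C : Finset V14) (p : V14 → Prop) [DecidablePred p] :
    Multiset.countP p C.val = (C.filter p).card := by
  rw [Multiset.countP_eq_card_filter]
  rfl

end CR14

open CR14 Finset in
theorem cr14_iff_oa (C : Finset (Fin 14 → Bool)) :
    (IsCR 14 2 C ↔ IsOA 14 7 2048 C.val) ∧ (IsCR 14 2 C → C.card = 2048) := by
  classical
  -- Direction CR → OA
  have cr_to_oa : IsCR 14 2 C → IsOA 14 7 2048 C.val := by
    intro h
    have he : ∀ x : V14, eN C x = 2 - 2 * fI C x := by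
      intro x
      rw [← card_dist_one C x]
      by_cases hx : x ∈ C
      · rw [h.1 x hx]; unfold fI; rw [if_pos hx]; norm_num
      · rw [h.2 x hx]; unfold fI; rw [if_neg hx]; norm_num
    have hF : ∀ S : Finset (Fin 14),
        (16 - 2 * (S.card : ℤ)) * FW C S = if S = ∅ then 2 ^ 15 else 0 := by
      intro S
      have h1 := eN_fourier C S
      have h2 : ∑ x : V14, eN C x * chi S x
          = 2 * (if S = ∅ then (2:ℤ) ^ 14 else 0) - 2 * FW C S := by
        rw [Finset.sum_congr rfl fun x _ => by rw [he x]]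
        have hxx : ∀ x : V14, (2 - 2 * fI C x) * chi S x
            = 2 * chi S x - 2 * (fI C x * chi S x) := fun x => by ring
        rw [Finset.sum_congr rfl fun x _ => hxx x, Finset.sum_sub_distrib,
          ← Finset.mul_sum, ← Finset.mul_sum, sum_chi]
        rfl
      rw [h1] at h2
      by_cases hS : S = ∅
      · rw [if_pos hS] at h2 ⊢
        rw [hS] at h2 ⊢
        simp only [Finset.card_empty, Nat.cast_zero] at h2 ⊢
        linarith
      · rw [if_neg hS] at h2 ⊢
        linarith
    have hF0 : FW C ∅ = 2048 := by
      have := hF ∅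
      rw [if_pos rfl] at this
      simp only [Finset.card_empty, Nat.cast_zero] at this
      linarith
    have hcard : C.card = 2048 := by
      have := FW_empty C
      rw [hF0] at this
      exact_mod_cast this.symm
    refine ⟨hcard, ?_⟩
    intro S hS a
    have hcnt : 2 ^ 7 * (((C.filter fun x => ∀ i ∈ S, x i = a i).card : ℤ)) = 2048 := by
      have hstr := strength_eq C S a
      rw [hS] at hstr
      rw [← hstr]
      rw [Finset.sum_eq_single_of_mem ∅ (Finset.empty_mem_powerset S)]
      · rw [chi_empty, hF0]; ring
      · intro S' hS' hne
        have hsub : S' ⊆ S := Finset.mem_powerset.1 hS'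
        have hle : S'.card ≤ 7 := hS ▸ Finset.card_le_card hsub
        have hFz : FW C S' = 0 := by
          have := hF S'
          rw [if_neg hne] at this
          have hcoef : (16 - 2 * (S'.card : ℤ)) ≠ 0 := by
            have : (S'.card : ℤ) ≤ 7 := by exact_mod_cast hle
            intro hc; linarith
          exact (mul_eq_zero.1 this).resolve_left hcoef
        rw [hFz, mul_zero]
    have hcnt' : (C.filter fun x => ∀ i ∈ S, x i = a i).card * 2 ^ 7 = 2048 := by
      have : (((C.filter fun x => ∀ i ∈ S, x i = a i).card * 2 ^ 7 : ℕ) : ℤ) = 2048 := by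
        push_cast
        linarith
      exact_mod_cast this
    rw [countP_eq]
    exact hcnt'
  -- Direction OA → CR
  have oa_to_cr : IsOA 14 7 2048 C.val → IsCR 14 2 C := by
    intro h
    have hcard : C.card = 2048 := h.1
    have hF0 : FW C ∅ = 2048 := by rw [FW_empty, hcard]; norm_num
    have hFlow : ∀ S : Finset (Fin 14), S ≠ ∅ → S.card ≤ 7 → FW C S = 0 := by
      intro S hne hle
      obtain ⟨T, hST, _, hTcard⟩ := Finset.exists_subsuperset_card_eq
        (Finset.subset_univ S) hle (by simp)
      have hcnt : ∀ a : V14, ((C.filter fun x => ∀ i ∈ T, x i = a i).card : ℤ) = 16 := by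
        intro a
        have h2 := h.2 T hTcard a
        rw [countP_eq] at h2
        have h3 : (C.filter fun x => ∀ i ∈ T, x i = a i).card * 2 ^ 7 = 16 * 2 ^ 7 := by
          rw [h2]; norm_num
        have h16 := Nat.eq_of_mul_eq_mul_right (by norm_num : 0 < 2 ^ 7) h3
        exact_mod_cast h16
      have hG : ∀ a : V14, ∑ S' ∈ T.powerset, chi S' a * FW C S' = 2048 := by
        intro a
        rw [strength_eq, hTcard, hcnt a]
        norm_num
      have hzero : ∑ a : V14, chi S a * (∑ S' ∈ T.powerset, chi S' a * FW C S') = 0 := by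
        rw [Finset.sum_congr rfl fun a _ => by rw [hG a], ← Finset.sum_mul, sum_chi,
          if_neg hne, zero_mul]
      have hswap : ∑ a : V14, chi S a * (∑ S' ∈ T.powerset, chi S' a * FW C S')
          = ∑ S' ∈ T.powerset, (∑ a : V14, chi S a * chi S' a) * FW C S' := by
        simp only [Finset.mul_sum]
        rw [Finset.sum_comm]
        refine Finset.sum_congr rfl fun S' _ => ?_
        rw [Finset.sum_mul]
        exact Finset.sum_congr rfl fun a _ => by ring
      rw [hswap] at hzero
      rw [Finset.sum_congr rfl fun S' _ => by rw [orth_chi S S']] at hzero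
      have hsingle : ∑ S' ∈ T.powerset, (if S = S' then (2:ℤ) ^ 14 else 0) * FW C S'
          = 2 ^ 14 * FW C S := by
        rw [Finset.sum_eq_single_of_mem S (Finset.mem_powerset.2 hST)]
        · rw [if_pos rfl]
        · intro S' _ hne'
          rw [if_neg (Ne.symm hne'), zero_mul]
      rw [hsingle] at hzero
      linarith
    -- Parseval with numbers
    have hpar : ∑ S : Finset (Fin 14), (FW C S) ^ 2 = 2 ^ 14 * 2048 := by
      rw [parseval, hcard]; norm_num
    set M := ∑ x : V14, fI C x * eN C x with hM
    have hMnn : 0 ≤ M :=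
      Finset.sum_nonneg fun x _ => mul_nonneg (fI_nonneg C x) (eN_nonneg C x)
    have hg : ∀ S ∈ Finset.univ.erase (∅ : Finset (Fin 14)),
        (0:ℤ) ≤ (2 * (S.card : ℤ) - 16) * (FW C S) ^ 2 := by
      intro S hS
      rcases eq_or_ne (FW C S) 0 with h0 | h0
      · rw [h0]; simp
      · have hne : S ≠ ∅ := (Finset.mem_erase.1 hS).1
        have h8 : 8 ≤ S.card := by
          by_contra hlt
          exact h0 (hFlow S hne (by omega))
        have h8' : (8:ℤ) ≤ (S.card : ℤ) := by exact_mod_cast h8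
        have := sq_nonneg (FW C S)
        nlinarith
    have hsum : ∑ S ∈ Finset.univ.erase (∅ : Finset (Fin 14)),
        (2 * (S.card : ℤ) - 16) * (FW C S) ^ 2 = -(2 ^ 14) * M := by
      have hall : ∑ S : Finset (Fin 14), (2 * (S.card : ℤ) - 16) * (FW C S) ^ 2
          = -(∑ S : Finset (Fin 14), (14 - 2 * (S.card : ℤ)) * (FW C S) ^ 2)
            - 2 * ∑ S : Finset (Fin 14), (FW C S) ^ 2 := by
        rw [← Finset.sum_neg_distrib, Finset.mul_sum, ← Finset.sum_sub_distrib]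
        exact Finset.sum_congr rfl fun S _ => by ring
      have herase : (2 * (((∅ : Finset (Fin 14))).card : ℤ) - 16) * (FW C ∅) ^ 2
          + ∑ S ∈ Finset.univ.erase (∅ : Finset (Fin 14)), (2 * (S.card : ℤ) - 16) * (FW C S) ^ 2
          = ∑ S : Finset (Fin 14), (2 * (S.card : ℤ) - 16) * (FW C S) ^ 2 :=
        Finset.add_sum_erase Finset.univ
          (fun S : Finset (Fin 14) => (2 * (S.card : ℤ) - 16) * (FW C S) ^ 2)
          (Finset.mem_univ (∅ : Finset (Fin 14)))
      have hg0 : (2 * ((∅ : Finset (Fin 14)).card : ℤ) - 16) * (FW C ∅) ^ 2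
          = -16 * 2048 ^ 2 := by
        rw [hF0]; simp
      rw [hg0] at herase
      rw [hall, spectral, hpar, ← hM] at herase
      linarith
    have hsnn : 0 ≤ ∑ S ∈ Finset.univ.erase (∅ : Finset (Fin 14)),
        (2 * (S.card : ℤ) - 16) * (FW C S) ^ 2 := Finset.sum_nonneg hg
    have hM0 : M = 0 := by
      rw [hsum] at hsnn
      linarith
    have hszero : ∑ S ∈ Finset.univ.erase (∅ : Finset (Fin 14)),
        (2 * (S.card : ℤ) - 16) * (FW C S) ^ 2 = 0 := by
      rw [hsum, hM0]; ring
    have hgzero := (Finset.sum_eq_zero_iff_of_nonneg hg).1 hszero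
    have hkey : ∀ S : Finset (Fin 14), S ≠ ∅ →
        (14 - 2 * (S.card : ℤ)) * FW C S = -2 * FW C S := by
      intro S hne
      have hz := hgzero S (Finset.mem_erase.2 ⟨hne, Finset.mem_univ S⟩)
      rcases mul_eq_zero.1 hz with h1 | h1
      · have : (S.card : ℤ) = 8 := by linarith
        rw [this]; ring
      · rw [sq_eq_zero_iff.1 h1]; ring
    -- pointwise neighbor count
    have hpt : ∀ x : V14, eN C x = 2 - 2 * fI C x := by
      intro x
      have hexp := expansion C x
      have herase : (14 - 2 * (((∅ : Finset (Fin 14))).card : ℤ)) * FW C ∅ * chi ∅ x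
          + ∑ S ∈ Finset.univ.erase (∅ : Finset (Fin 14)),
              (14 - 2 * (S.card : ℤ)) * FW C S * chi S x
          = ∑ S : Finset (Fin 14), (14 - 2 * (S.card : ℤ)) * FW C S * chi S x :=
        Finset.add_sum_erase Finset.univ
          (fun S : Finset (Fin 14) => (14 - 2 * (S.card : ℤ)) * FW C S * chi S x)
          (Finset.mem_univ (∅ : Finset (Fin 14)))
      have hterm : ∀ S ∈ Finset.univ.erase (∅ : Finset (Fin 14)),
          (14 - 2 * (S.card : ℤ)) * FW C S * chi S x = -2 * (FW C S * chi S x) := by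
        intro S hS
        rw [hkey S (Finset.mem_erase.1 hS).1]
        ring
      have hrest : ∑ S ∈ Finset.univ.erase (∅ : Finset (Fin 14)),
          (14 - 2 * (S.card : ℤ)) * FW C S * chi S x
          = -2 * (2 ^ 14 * fI C x - FW C ∅ * chi ∅ x) := by
        rw [Finset.sum_congr rfl hterm, ← Finset.mul_sum]
        congr 1
        have hi : FW C ∅ * chi ∅ x + ∑ S ∈ Finset.univ.erase (∅ : Finset (Fin 14)),
            FW C S * chi S x = ∑ S : Finset (Fin 14), FW C S * chi S x :=
          Finset.add_sum_erase Finset.univ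
            (fun S : Finset (Fin 14) => FW C S * chi S x)
            (Finset.mem_univ (∅ : Finset (Fin 14)))
        rw [inversion] at hi
        linarith
      rw [← herase, hrest, hF0, chi_empty] at hexp
      simp only [Finset.card_empty, Nat.cast_zero, hF0, chi_empty] at hexp
      linarith
    constructor
    · intro x hx
      have := card_dist_one C x
      rw [hpt x] at this
      unfold fI at this
      rw [if_pos hx] at this
      have : ((C.filter fun y => hammingDist x y = 1).card : ℤ) = 0 := by linarith
      exact_mod_cast this
    · intro x hx
      have := card_dist_one C x
      rw [hpt x] at this
      unfold fI at this
      rw [if_neg hx] at this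
      have : ((C.filter fun y => hammingDist x y = 1).card : ℤ) = 2 := by linarith
      exact_mod_cast this
  exact ⟨⟨cr_to_oa, oa_to_cr⟩, fun h => (cr_to_oa h).1⟩
end

section
/- Let C ⊆ {0,1}^{14} be a completely regular code with intersection array {14;2} containing the zero word, and let G be the set of supports of weight-2 codewords of C and B the set of supports of weight-3 codewords of C. Then (G, B) forms a (3,2)-group divisible design of type 2^7 on the point set {1,...,14}: G partitions the points into 7 groups of size 2, every block in B has size 3, and any two distinct points lie either in a common group and in no common block, or in exactly 2 common blocks and in no common group. -/
/-- The Hamming weight of a binary word. -/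
def wt {n : ℕ} (x : Fin n → Bool) : ℕ := (Finset.univ.filter fun i => x i = true).card

open Finset

lemma hd_def {n : ℕ} (x y : Fin n → Bool) :
    hammingDist x y = (univ.filter fun i => x i ≠ y i).card := rfl

lemma hdist_one {n : ℕ} {x y : Fin n → Bool} (h : hammingDist x y = 1) :
    ∃ i, y = Function.update x i (!(x i)) := by
  rw [hd_def] at h
  obtain ⟨i, hi⟩ := Finset.card_eq_one.mp h
  have hmem : i ∈ univ.filter fun k => x k ≠ y k := by
    rw [hi]; exact mem_singleton_self i
  have hne : x i ≠ y i := (mem_filter.mp hmem).2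
  refine ⟨i, funext fun j => ?_⟩
  by_cases hj : j = i
  · subst hj
    have hyj : y j = !(x j) := by
      cases hxj : x j <;> cases hyj : y j <;> simp_all
    rw [hyj, Function.update_self]
  · have h2 : ¬ x j ≠ y j := by
      intro hne2
      have : j ∈ univ.filter fun k => x k ≠ y k :=
        mem_filter.mpr ⟨mem_univ _, hne2⟩
      rw [hi] at this
      exact hj (mem_singleton.mp this)
    rw [Function.update_of_ne hj]
    exact (not_not.mp h2).symm

lemma filter_ne_eq {n : ℕ} (x y : Fin n → Bool) (S : Finset (Fin n))
    (hx : ∀ i, x i = true ↔ i ∈ S) (hy : ∀ i ∈ S, y i = true) :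
    (univ.filter fun i => x i ≠ y i) = (univ.filter fun i => y i = true) \ S := by
  ext i
  simp only [mem_filter, mem_univ, true_and, mem_sdiff]
  by_cases hiS : i ∈ S
  · simp [hiS, (hx i).mpr hiS, hy i hiS]
  · have hxi : x i = false := by
      cases hxi : x i
      · rfl
      · exact absurd ((hx i).mp hxi) hiS
    cases hyi : y i <;> simp [hiS, hxi, hyi]

lemma dist_of_subset {n : ℕ} (x y : Fin n → Bool) (S : Finset (Fin n))
    (hx : ∀ i, x i = true ↔ i ∈ S) (hy : ∀ i ∈ S, y i = true) :
    hammingDist x y = wt y - S.card := by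
  rw [hd_def, filter_ne_eq x y S hx hy, card_sdiff_of_subset]
  · rfl
  · intro i hi; exact mem_filter.mpr ⟨mem_univ _, hy i hi⟩

/-- the weight-one word supported at `p` -/
def ee {n : ℕ} (p : Fin n) : Fin n → Bool := fun i => decide (i = p)

lemma ee_supp {n : ℕ} (p : Fin n) : ∀ i, ee p i = true ↔ i ∈ ({p} : Finset (Fin n)) := by
  intro i; simp [ee]

lemma zero_wt {n : ℕ} : wt (fun _ => false : Fin n → Bool) = 0 := by simp [wt]

lemma dist_ee_zero {n : ℕ} (p : Fin n) : hammingDist (ee p) (fun _ => false) = 1 := by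
  have h : (univ.filter fun i => ee p i ≠ (fun _ => false : Fin n → Bool) i) = {p} := by
    ext i; simp [ee]
  rw [hd_def, h, card_singleton]

lemma ee_not_mem {n : ℕ} {C : Finset (Fin n → Bool)} (h : IsCR n 2 C)
    (h0 : (fun _ => false) ∈ C) (p : Fin n) : ee p ∉ C := by
  intro hp
  have h1 := h.1 (ee p) hp
  have hm : (fun _ => false : Fin n → Bool) ∈ C.filter fun y => hammingDist (ee p) y = 1 :=
    mem_filter.mpr ⟨h0, dist_ee_zero p⟩
  rw [card_eq_zero] at h1
  simp [h1] at hm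

lemma key_card {C : Finset (Fin 14 → Bool)} (h : IsCR 14 2 C)
    (h0 : (fun _ => false) ∈ C) (p : Fin 14) :
    (C.filter fun y => wt y = 2 ∧ y p = true).card = 1 := by
  have hN := h.2 (ee p) (ee_not_mem h h0 p)
  have hins : (C.filter fun y => hammingDist (ee p) y = 1) =
      insert (fun _ => false) (C.filter fun y => wt y = 2 ∧ y p = true) := by
    ext y
    simp only [mem_filter, mem_insert]
    constructor
    · rintro ⟨hyC, hd⟩
      obtain ⟨i, rfl⟩ := hdist_one hd
      by_cases hip : i = p
      · left
        subst hip
        funext j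
        by_cases hj : j = i
        · subst hj; simp [ee]
        · rw [Function.update_of_ne hj]; simp [ee, hj]
      · right
        have hval : ee p i = false := by simp [ee, hip]
        refine ⟨hyC, ?_, ?_⟩
        · have hsupp : (univ.filter fun j => Function.update (ee p) i (!(ee p i)) j = true)
              = {i, p} := by
            ext j
            by_cases hj : j = i
            · subst hj; simp [hval]
            · rw [mem_filter, Function.update_of_ne hj]
              simp [ee, hj]
          rw [wt, hsupp, card_insert_of_notMem (by simp [hip]), card_singleton]
        · rw [Function.update_of_ne (fun hpe => hip hpe.symm)]
          simp [ee]
    · rintro (rfl | ⟨hyC, hw, hyp⟩)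
      · exact ⟨h0, dist_ee_zero p⟩
      · refine ⟨hyC, ?_⟩
        rw [dist_of_subset (ee p) y {p} (ee_supp p)
          (fun i hi => by rw [mem_singleton.mp hi]; exact hyp), hw, card_singleton]
  rw [hins] at hN
  have hnm : (fun _ => false : Fin 14 → Bool) ∉ C.filter fun y => wt y = 2 ∧ y p = true := by
    intro hmem
    have h2 := (mem_filter.mp hmem).2.1
    rw [zero_wt] at h2
    exact absurd h2 (by norm_num)
  rw [card_insert_of_notMem hnm] at hN
  exact Nat.add_right_cancel hN

lemma ex_unique {C : Finset (Fin 14 → Bool)} (h : IsCR 14 2 C)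
    (h0 : (fun _ => false) ∈ C) (p : Fin 14) :
    ∃! y, y ∈ C ∧ wt y = 2 ∧ y p = true := by
  obtain ⟨a, ha⟩ := card_eq_one.mp (key_card h h0 p)
  have hamem : a ∈ C.filter fun y => wt y = 2 ∧ y p = true := by
    rw [ha]; exact mem_singleton_self a
  rw [mem_filter] at hamem
  refine ⟨a, ⟨hamem.1, hamem.2⟩, ?_⟩
  intro y hy
  have : y ∈ C.filter fun y => wt y = 2 ∧ y p = true :=
    mem_filter.mpr ⟨hy.1, hy.2⟩
  rw [ha] at this
  exact mem_singleton.mp this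

lemma count_seven {C : Finset (Fin 14 → Bool)} (h : IsCR 14 2 C)
    (h0 : (fun _ => false) ∈ C) :
    (C.filter fun y => wt y = 2).card = 7 := by
  have hsum : ∑ y ∈ C.filter (fun y => wt y = 2), wt y
      = ∑ p : Fin 14, (C.filter fun y => wt y = 2 ∧ y p = true).card := by
    calc ∑ y ∈ C.filter (fun y => wt y = 2), wt y
        = ∑ y ∈ C.filter (fun y => wt y = 2), ∑ p : Fin 14, if y p = true then 1 else 0 :=
          Finset.sum_congr rfl (fun y _ => by rw [wt, card_filter])
      _ = ∑ p : Fin 14, ∑ y ∈ C.filter (fun y => wt y = 2), if y p = true then 1 else 0 :=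
          Finset.sum_comm
      _ = ∑ p : Fin 14, (C.filter fun y => wt y = 2 ∧ y p = true).card := by
          refine Finset.sum_congr rfl fun p _ => ?_
          rw [← card_filter, filter_filter]
  have hL : ∑ y ∈ C.filter (fun y => wt y = 2), wt y
      = 2 * (C.filter fun y => wt y = 2).card := by
    rw [Finset.sum_congr rfl (fun y hy => (mem_filter.mp hy).2), sum_const, smul_eq_mul,
      mul_comm]
  have hR : ∑ p : Fin 14, (C.filter fun y => wt y = 2 ∧ y p = true).card = 14 := by
    rw [Finset.sum_congr rfl (fun p _ => key_card h h0 p), sum_const, smul_eq_mul]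
    simp
  have : 2 * (C.filter fun y => wt y = 2).card = 2 * 7 := by
    rw [← hL, hsum, hR]
  exact Nat.eq_of_mul_eq_mul_left (by norm_num) this

lemma supp_pair {p q : Fin 14} (hpq : p ≠ q) {y : Fin 14 → Bool}
    (hw : wt y = 2) (hp : y p = true) (hq : y q = true) :
    ∀ i, y i = true ↔ i ∈ ({p, q} : Finset (Fin 14)) := by
  have hsub : ({p, q} : Finset (Fin 14)) ⊆ univ.filter fun i => y i = true := by
    intro i hi
    rcases mem_insert.mp hi with rfl | hi
    · exact mem_filter.mpr ⟨mem_univ _, hp⟩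
    · rw [mem_singleton.mp hi]; exact mem_filter.mpr ⟨mem_univ _, hq⟩
  have hcard : ({p, q} : Finset (Fin 14)).card = 2 := by
    rw [card_insert_of_notMem (by simp [hpq]), card_singleton]
  have heq : (univ.filter fun i => y i = true) = {p, q} :=
    (eq_of_subset_of_card_le hsub (by rw [hcard]; exact hw.le)).symm
  intro i
  constructor
  · intro hyi
    rw [← heq]
    exact mem_filter.mpr ⟨mem_univ _, hyi⟩
  · intro hi
    have hm : i ∈ univ.filter fun j => y j = true := by rw [heq]; exact hi
    exact (mem_filter.mp hm).2

lemma mem_pair_true {p q : Fin 14} {z : Fin 14 → Bool}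
    (hzp : z p = true) (hzq : z q = true) :
    ∀ i ∈ ({p, q} : Finset (Fin 14)), z i = true := by
  intro i hi
  rcases mem_insert.mp hi with rfl | hi
  · exact hzp
  · rw [mem_singleton.mp hi]; exact hzq

lemma part4a {C : Finset (Fin 14 → Bool)} (h : IsCR 14 2 C) {p q : Fin 14} (hpq : p ≠ q) :
    (∃ y ∈ C, wt y = 2 ∧ y p = true ∧ y q = true) →
      ¬ ∃ z ∈ C, wt z = 3 ∧ z p = true ∧ z q = true := by
  rintro ⟨y, hyC, hw2, hyp, hyq⟩ ⟨z, hzC, hw3, hzp, hzq⟩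
  have hd : hammingDist y z = 1 := by
    rw [dist_of_subset y z {p, q} (supp_pair hpq hw2 hyp hyq) (mem_pair_true hzp hzq),
      hw3, card_insert_of_notMem (by simp [hpq]), card_singleton]
  have h1 := h.1 y hyC
  rw [card_eq_zero] at h1
  have hmem : z ∈ C.filter fun w => hammingDist y w = 1 := mem_filter.mpr ⟨hzC, hd⟩
  rw [h1] at hmem
  exact absurd hmem (notMem_empty z)

lemma part4b {C : Finset (Fin 14 → Bool)} (h : IsCR 14 2 C)
    (h0 : (fun _ => false) ∈ C) {p q : Fin 14} (hpq : p ≠ q)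
    (hno : ¬ ∃ y ∈ C, wt y = 2 ∧ y p = true ∧ y q = true) :
    (C.filter fun z => wt z = 3 ∧ z p = true ∧ z q = true).card = 2 := by
  set x : Fin 14 → Bool := fun i => decide (i = p ∨ i = q) with hxdef
  have hxsupp : ∀ i, x i = true ↔ i ∈ ({p, q} : Finset (Fin 14)) := by
    intro i; simp [hxdef]
  have hxp : x p = true := by simp [hxdef]
  have hxq : x q = true := by simp [hxdef]
  have hxw : wt x = 2 := by
    have hf : (univ.filter fun i => x i = true) = {p, q} := by
      ext i
      rw [mem_filter]
      simp [hxsupp i]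
    rw [wt, hf, card_insert_of_notMem (by simp [hpq]), card_singleton]
  have hxC : x ∉ C := fun hxC => hno ⟨x, hxC, hxw, hxp, hxq⟩
  have hN := h.2 x hxC
  have hset : (C.filter fun z => hammingDist x z = 1)
      = C.filter fun z => wt z = 3 ∧ z p = true ∧ z q = true := by
    ext z
    simp only [mem_filter]
    constructor
    · rintro ⟨hzC, hd⟩
      obtain ⟨i, rfl⟩ := hdist_one hd
      have hip : i ≠ p := by
        intro hip
        subst hip
        have heq : Function.update x i (!(x i)) = ee q := by
          funext j
          by_cases hj : j = i
          · subst hj; simp [hxdef, ee, hpq]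
          · rw [Function.update_of_ne hj]; simp [hxdef, ee, hj]
        exact absurd hzC (heq ▸ ee_not_mem h h0 q)
      have hiq : i ≠ q := by
        intro hiq
        subst hiq
        have heq : Function.update x i (!(x i)) = ee p := by
          funext j
          by_cases hj : j = i
          · subst hj; simp [hxdef, ee, hip]
          · rw [Function.update_of_ne hj]; simp [hxdef, ee, hj]
        exact absurd hzC (heq ▸ ee_not_mem h h0 p)
      have hxi : x i = false := by simp [hxdef, hip, hiq]
      refine ⟨hzC, ?_, ?_, ?_⟩
      · have hsupp : (univ.filter fun j => Function.update x i (!(x i)) j = true)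
            = {i, p, q} := by
          ext j
          by_cases hj : j = i
          · subst hj; simp [hxi]
          · rw [mem_filter, Function.update_of_ne hj]
            simp [hxdef, hj]
        rw [wt, hsupp, card_insert_of_notMem (by simp [hip, hiq]),
          card_insert_of_notMem (by simp [hpq]), card_singleton]
      · rw [Function.update_of_ne (fun e => hip e.symm)]; exact hxp
      · rw [Function.update_of_ne (fun e => hiq e.symm)]; exact hxq
    · rintro ⟨hzC, hw3, hzp, hzq⟩
      refine ⟨hzC, ?_⟩
      rw [dist_of_subset x z {p, q} hxsupp (mem_pair_true hzp hzq), hw3,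
        card_insert_of_notMem (by simp [hpq]), card_singleton]
  rw [hset] at hN
  exact hN

theorem derived_gdd (C : Finset (Fin 14 → Bool)) (h : IsCR 14 2 C)
    (h0 : (fun _ => false) ∈ C) :
    (C.filter fun y => wt y = 2).card = 7 ∧
    (∀ p : Fin 14, ∃! y, y ∈ C ∧ wt y = 2 ∧ y p = true) ∧
    (∀ z ∈ C, wt z = 3 → (Finset.univ.filter fun i => z i = true).card = 3) ∧
    (∀ p q : Fin 14, p ≠ q →
      ((∃ y ∈ C, wt y = 2 ∧ y p = true ∧ y q = true) →
        ¬ ∃ z ∈ C, wt z = 3 ∧ z p = true ∧ z q = true) ∧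
      ((¬ ∃ y ∈ C, wt y = 2 ∧ y p = true ∧ y q = true) →
        (C.filter fun z => wt z = 3 ∧ z p = true ∧ z q = true).card = 2)) :=
  ⟨count_seven h h0, fun p => ex_unique h h0 p, fun _ _ hw => hw,
    fun _ _ hpq => ⟨part4a h hpq, part4b h h0 hpq⟩⟩
end

section
/- If C ⊆ {0,1}^{n+1} is a 1-perfect binary code, then puncturing C in any coordinate yields a set C' ⊆ {0,1}^n of the same cardinality 2^{n+1}/(n+2), and C' is a completely regular code in Q_n with covering radius 1 in which every vertex outside C' has exactly 2 neighbors in C' and every vertex of C' has no neighbors in C'. -/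
/-!
A 1-perfect code has minimum distance 3, so puncturing it is injective and punctured codewords
are never adjacent: their lifts would be at distance at most 2. For `x` outside the punctured
code and `b : Bool`, the codeword covering `insertNth i b x` is exactly the codeword with `b` at
`i` that punctures to a neighbour of `x`, so `x` has exactly two neighbours in the punctured code.
The size comes from the sphere-packing equality `#C * (n + 2) = 2 ^ (n + 1)`, by double counting
pairs (codeword, word it covers).
-/

open Finset Function

section Hamming

variable {ι β : Type*} [Fintype ι] [DecidableEq ι] [DecidableEq β]

theorem hammingDist_update_self_le_one (x : ι → β) (j : ι) (b : β) :
    hammingDist (update x j b) x ≤ 1 := by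
  refine (card_le_card fun k hk => mem_singleton.mpr ?_).trans (card_singleton j).le
  by_contra hkj
  simp [update_of_ne hkj] at hk

theorem hammingDist_update_add_one {x y : ι → β} {j : ι} (h : x j ≠ y j) :
    hammingDist (update x j (y j)) y + 1 = hammingDist x y := by
  have hdiff : ({k | update x j (y j) k ≠ y k} : Finset ι) =
      ({k | x k ≠ y k} : Finset ι).erase j := by
    ext k
    by_cases hk : k = j <;> simp [hk, update_of_ne]
  rw [hammingDist, hdiff, card_erase_add_one (by simpa using h), hammingDist]

theorem hammingDist_le_one_iff {x c : ι → Bool} :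
    hammingDist x c ≤ 1 ↔ x = c ∨ ∃ j, x = update c j (!c j) := by
  constructor
  · intro h
    rcases Nat.le_one_iff_eq_zero_or_eq_one.mp h with h0 | h1
    · exact .inl (hammingDist_eq_zero.mp h0)
    · obtain ⟨j, hj⟩ := card_eq_one.mp h1
      refine .inr ⟨j, funext fun k => ?_⟩
      have hk : x k ≠ c k ↔ k = j := by simpa using congrArg (k ∈ ·) hj
      by_cases hkj : k = j
      · subst hkj; simpa [Bool.eq_not] using hk
      · simpa [update_of_ne hkj] using hk.not.mpr hkj
  · rintro (rfl | ⟨j, rfl⟩)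
    · simp
    · exact hammingDist_update_self_le_one c j _

theorem card_filter_hammingDist_le_one (c : ι → Bool) :
    #{x | hammingDist x c ≤ 1} = Fintype.card ι + 1 := by
  have hball : ({x | hammingDist x c ≤ 1} : Finset (ι → Bool)) =
      univ.image fun o : Option ι => o.elim c fun j => update c j (!c j) := by
    ext x
    simp [hammingDist_le_one_iff, Option.exists, eq_comm (a := x)]
  rw [hball, card_image_of_injective, card_univ, Fintype.card_option]
  rintro (_ | j) (_ | j') h <;> simp at h
  · rfl
  · congr 1
    by_contra hne
    simpa [update_of_ne hne] using congrFun h j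

end Hamming

section Puncture

variable {n : ℕ} {β : Type*} [DecidableEq β]

theorem hammingDist_eq_comp_succAbove_add (i : Fin (n + 1)) (x y : Fin (n + 1) → β) :
    hammingDist x y =
      hammingDist (x ∘ i.succAbove) (y ∘ i.succAbove) + if x i = y i then 0 else 1 := by
  simp only [hammingDist, card_filter, Fin.sum_univ_succAbove _ i, add_comm, comp_apply]
  split_ifs <;> simp_all

theorem hammingDist_insertNth_left (i : Fin (n + 1)) (b : β) (x : Fin n → β)
    (y : Fin (n + 1) → β) :
    hammingDist (i.insertNth b x) y =
      hammingDist x (y ∘ i.succAbove) + if b = y i then 0 else 1 := by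
  simp [hammingDist_eq_comp_succAbove_add i]

theorem hammingDist_insertNth_le_one_iff {i : Fin (n + 1)} {x : Fin n → β}
    {c : Fin (n + 1) → β} (hx : x ≠ c ∘ i.succAbove) (b : β) :
    hammingDist (i.insertNth b x) c ≤ 1 ↔
      hammingDist x (c ∘ i.succAbove) = 1 ∧ c i = b := by
  have hpos := hammingDist_pos.mpr hx
  rw [hammingDist_insertNth_left]
  split_ifs with hb <;> grind

end Puncture

def IsOnePerfect {ι β : Type*} [Fintype ι] [DecidableEq β] (C : Finset (ι → β)) : Prop :=
  ∀ x : ι → β, ∃! c, c ∈ C ∧ hammingDist x c ≤ 1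

namespace IsOnePerfect

section General

variable {ι β : Type*} [Fintype ι] [DecidableEq β] {C : Finset (ι → β)}

theorem eq_of_hammingDist_le_one (hC : IsOnePerfect C) {x c c' : ι → β} (hc : c ∈ C)
    (hc' : c' ∈ C) (h : hammingDist x c ≤ 1) (h' : hammingDist x c' ≤ 1) : c = c' :=
  (hC x).unique ⟨hc, h⟩ ⟨hc', h'⟩

theorem eq_of_hammingDist_le_two [DecidableEq ι] (hC : IsOnePerfect C) {c c' : ι → β}
    (hc : c ∈ C) (hc' : c' ∈ C) (h : hammingDist c c' ≤ 2) : c = c' := by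
  by_contra hne
  obtain ⟨j, hj⟩ := Function.ne_iff.mp hne
  have hmid := hammingDist_update_add_one hj
  exact hne <| hC.eq_of_hammingDist_le_one hc hc' (hammingDist_update_self_le_one c j (c' j))
    (by omega)

end General

theorem card_mul_card_add_one {ι : Type*} [Fintype ι] [DecidableEq ι] {C : Finset (ι → Bool)}
    (hC : IsOnePerfect C) :
    #C * (Fintype.card ι + 1) = 2 ^ Fintype.card ι := by
  have hball (c : ι → Bool) (_ : c ∈ C) :
      #(univ.bipartiteAbove (fun c x => hammingDist x c ≤ 1) c) = Fintype.card ι + 1 :=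
    card_filter_hammingDist_le_one c
  have hcover (x : ι → Bool) (_ : x ∈ univ) :
      #(C.bipartiteBelow (fun c x => hammingDist x c ≤ 1) x) = 1 := by
    obtain ⟨c, hc, huniq⟩ := hC x
    exact card_eq_one.mpr ⟨c, eq_singleton_iff_unique_mem.mpr
      ⟨mem_filter.mpr hc, fun c' hc' => huniq c' (mem_filter.mp hc')⟩⟩
  simpa using card_mul_eq_card_mul _ hball hcover

variable {n : ℕ} {C : Finset (Fin (n + 1) → Bool)}

theorem injOn_comp_succAbove (hC : IsOnePerfect C) (i : Fin (n + 1)) :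
    Set.InjOn (fun c : Fin (n + 1) → Bool => c ∘ i.succAbove) C := by
  intro c hc c' hc' h
  refine hC.eq_of_hammingDist_le_two hc hc' ?_
  rw [hammingDist_eq_comp_succAbove_add i, show c ∘ i.succAbove = c' ∘ i.succAbove from h,
    hammingDist_self]
  split_ifs <;> omega

theorem hammingDist_comp_succAbove_ne_one (hC : IsOnePerfect C) (i : Fin (n + 1))
    {c c' : Fin (n + 1) → Bool} (hc : c ∈ C) (hc' : c' ∈ C) :
    hammingDist (c ∘ i.succAbove) (c' ∘ i.succAbove) ≠ 1 := by
  intro h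
  have hcc' := hC.eq_of_hammingDist_le_two hc hc' <| by
    rw [hammingDist_eq_comp_succAbove_add i, h]
    split_ifs <;> omega
  simp [hcc'] at h

theorem card_filter_hammingDist_comp_succAbove_eq_two (hC : IsOnePerfect C) (i : Fin (n + 1))
    {x : Fin n → Bool} (hx : x ∉ C.image fun c => c ∘ i.succAbove) :
    #{c ∈ C | hammingDist x (c ∘ i.succAbove) = 1} = 2 := by
  have hne (c) (hc : c ∈ C) : x ≠ c ∘ i.succAbove := fun h =>
    hx (mem_image.mpr ⟨c, hc, h.symm⟩)
  refine (card_bij (fun c _ => c i) (fun _ _ => mem_univ _) ?_ ?_).trans Fintype.card_bool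
  · intro c hc c' hc' hcc'
    rw [mem_filter] at hc hc'
    exact hC.eq_of_hammingDist_le_one hc.1 hc'.1
      ((hammingDist_insertNth_le_one_iff (hne c hc.1) (c i)).mpr ⟨hc.2, rfl⟩)
      ((hammingDist_insertNth_le_one_iff (hne c' hc'.1) (c i)).mpr ⟨hc'.2, hcc'.symm⟩)
  · intro b _
    obtain ⟨c, ⟨hc, hdist⟩, -⟩ := hC (i.insertNth b x)
    obtain ⟨h1, hb⟩ := (hammingDist_insertNth_le_one_iff (hne c hc) b).mp hdist
    exact ⟨c, mem_filter.mpr ⟨hc, h1⟩, hb⟩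

end IsOnePerfect

theorem punctured_perfect_is_cr (n : ℕ) (C : Finset (Fin (n + 1) → Bool))
    (hperf : ∀ x : Fin (n + 1) → Bool, ∃! c, c ∈ C ∧ hammingDist x c ≤ 1)
    (i : Fin (n + 1)) :
    (C.image fun x => x ∘ i.succAbove).card = C.card ∧
    (C.image fun x => x ∘ i.succAbove).card * (n + 2) = 2 ^ (n + 1) ∧
    (∀ x ∈ C.image fun x => x ∘ i.succAbove,
      (((C.image fun x => x ∘ i.succAbove)).filter fun y => hammingDist x y = 1).card = 0) ∧
    (∀ x ∉ C.image fun x => x ∘ i.succAbove,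
      (((C.image fun x => x ∘ i.succAbove)).filter fun y => hammingDist x y = 1).card = 2) := by
  have hC : IsOnePerfect C := hperf
  have hinj := hC.injOn_comp_succAbove i
  refine ⟨card_image_of_injOn hinj, ?_, ?_, ?_⟩
  · rw [card_image_of_injOn hinj]
    simpa using hC.card_mul_card_add_one
  · intro x hx
    obtain ⟨c, hc, rfl⟩ := mem_image.mp hx
    refine card_eq_zero.mpr (filter_eq_empty_iff.mpr fun y hy => ?_)
    obtain ⟨c', hc', rfl⟩ := mem_image.mp hy
    exact hC.hammingDist_comp_succAbove_ne_one i hc hc'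
  · intro x hx
    rw [filter_image, card_image_of_injOn (hinj.mono (filter_subset _ C))]
    exact hC.card_filter_hammingDist_comp_succAbove_eq_two i hx
end
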